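/- Let C be an abelian category and 𝒲 a class of objects of C closed under isomorphisms and finite direct sums. Let 0→X₁→X₀→X→0 be a Hom(𝒲,−)-exact short exact sequence in C, let (W₀ⁱ)_{i≥0} be the terms of a proper 𝒲-resolution of X₀ and (W₁ⁱ)_{i≥0} the terms of a proper 𝒲-resolution of X₁. Then: (1) X admits a proper 𝒲-resolution whose 0-th term is W₀⁰ and whose i-th term is W₀ⁱ ⊕ W₁^{i−1} for all i ≥ 1; (2) if the two given proper 𝒲-resolutions are Hom(−,𝒲)-exact and the short exact sequence 0→X₁→X₀→X→0 is Hom(−,𝒲)-exact, then this proper 𝒲-resolution of X can be chosen Hom(−,𝒲)-exact. -/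

import Mathlib

open CategoryTheory Category Limits

universe v u

variable {C : Type u} [Category.{v} C] [Abelian C]

def SES {A B X : C} (f : A ⟶ B) (g : B ⟶ X) : Prop :=
  ∃ w : f ≫ g = 0, (CategoryTheory.ShortComplex.mk f g w).ShortExact

def CovExact (𝒲 : Set C) {A B X : C} (f : A ⟶ B) (g : B ⟶ X) : Prop :=
  ∀ W ∈ 𝒲,
    (Function.Injective fun u : W ⟶ A => u ≫ f) ∧
    (∀ v : W ⟶ B, v ≫ g = 0 → ∃ u : W ⟶ A, u ≫ f = v) ∧
    (Function.Surjective fun v : W ⟶ B => v ≫ g)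

def ContraExact (𝒲 : Set C) {A B X : C} (f : A ⟶ B) (g : B ⟶ X) : Prop :=
  ∀ W ∈ 𝒲,
    (Function.Injective fun u : X ⟶ W => g ≫ u) ∧
    (∀ v : B ⟶ W, f ≫ v = 0 → ∃ u : X ⟶ W, g ≫ u = v) ∧
    (Function.Surjective fun v : B ⟶ W => f ≫ v)

/-- A proper `𝒲`-resolution of `A` with terms `W i`: short exact sequences
`0 ⟶ K (i+1) ⟶ W i ⟶ K i ⟶ 0` with `K 0 = A`, each `W i ∈ 𝒲`, each `Hom(𝒲,-)`-exact. -/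
structure ProperResolution (𝒲 : Set C) (A : C) (W : ℕ → C) where
  K : ℕ → C
  hK : K 0 = A
  g : ∀ i, K (i + 1) ⟶ W i
  f : ∀ i, W i ⟶ K i
  mem : ∀ i, W i ∈ 𝒲
  ses : ∀ i, SES (g i) (f i)
  proper : ∀ i, CovExact 𝒲 (g i) (f i)

/-- The proper resolution is in addition `Hom(-,𝒲)`-exact. -/
def ProperResolution.IsContraExact {𝒲 : Set C} {A : C} {W : ℕ → C}
    (R : ProperResolution 𝒲 A W) : Prop :=
  ∀ i, ContraExact 𝒲 (R.g i) (R.f i)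

/-- A coproper `𝒲`-coresolution of `A` with terms `W i`: short exact sequences
`0 ⟶ K i ⟶ W i ⟶ K (i+1) ⟶ 0` with `K 0 = A`, each `W i ∈ 𝒲`, each `Hom(-,𝒲)`-exact. -/
structure CoproperCoresolution (𝒲 : Set C) (A : C) (W : ℕ → C) where
  K : ℕ → C
  hK : K 0 = A
  g : ∀ i, K i ⟶ W i
  f : ∀ i, W i ⟶ K (i + 1)
  mem : ∀ i, W i ∈ 𝒲
  ses : ∀ i, SES (g i) (f i)
  coproper : ∀ i, ContraExact 𝒲 (g i) (f i)

/-- The coproper coresolution is in addition `Hom(𝒲,-)`-exact. -/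
def CoproperCoresolution.IsCovExact {𝒲 : Set C} {A : C} {W : ℕ → C}
    (R : CoproperCoresolution 𝒲 A W) : Prop :=
  ∀ i, CovExact 𝒲 (R.g i) (R.f i)

/-- Membership in the Gorenstein category `G(𝒲)`: `X` admits both a proper `𝒲`-resolution
which is `Hom(-,𝒲)`-exact and a coproper `𝒲`-coresolution which is `Hom(𝒲,-)`-exact
(i.e. a complete `𝒲`-resolution). -/
def MemGW (𝒲 : Set C) (X : C) : Prop :=
  (∃ (W : ℕ → C) (R : ProperResolution 𝒲 X W), R.IsContraExact) ∧
  (∃ (W : ℕ → C) (R : CoproperCoresolution 𝒲 X W), R.IsCovExact)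

/-!
The resolution of `X` is built by a horseshoe induction. Write `K⁰ₙ`, `K¹ₙ` for the syzygies of
the two given resolutions. In degree `0` the map `W₀⁰ ⟶ X₀ ⟶ X` is an epimorphism whose kernel `B₀`
sits in a sequence `0 ⟶ K⁰₁ ⟶ B₀ ⟶ K¹₀ ⟶ 0`. Given such a `Hom(𝒲,-)`-exact sequence
`0 ⟶ K⁰ₙ₊₁ ⟶ Bₙ ⟶ K¹ₙ ⟶ 0`, the map `W₁ⁿ ⟶ K¹ₙ` lifts to `Bₙ` because `W₁ⁿ ∈ 𝒲`, which gives an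
epimorphism `W₀ⁿ⁺¹ ⊞ W₁ⁿ ⟶ K⁰ₙ₊₁ ⊞ W₁ⁿ ⟶ Bₙ`; its kernel `Bₙ₊₁` again sits in
`0 ⟶ K⁰ₙ₊₂ ⟶ Bₙ₊₁ ⟶ K¹ₙ₊₁ ⟶ 0`. Both kernels are computed by the exact sequence
`0 ⟶ ker f ⟶ ker (f ≫ y) ⟶ ker y ⟶ 0` for epimorphisms `f` and `y`, and `Hom(𝒲,-)`- and
`Hom(-,𝒲)`-exactness are carried through each step by lifting or extending maps one factor at a
time.
-/

open Preadditive

def CovSurjective (𝒲 : Set C) {B X : C} (g : B ⟶ X) : Prop :=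
  ∀ W ∈ 𝒲, ∀ v : W ⟶ X, ∃ u : W ⟶ B, u ≫ g = v

def ContraSurjective (𝒲 : Set C) {A B : C} (f : A ⟶ B) : Prop :=
  ∀ W ∈ 𝒲, ∀ v : A ⟶ W, ∃ u : B ⟶ W, f ≫ u = v

variable {𝒲 : Set C}

omit [Abelian C] in
lemma CovSurjective.comp {A B X : C} {f : A ⟶ B} {g : B ⟶ X}
    (hf : CovSurjective 𝒲 f) (hg : CovSurjective 𝒲 g) : CovSurjective 𝒲 (f ≫ g) := by
  intro W hW v
  obtain ⟨u, rfl⟩ := hg W hW v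
  obtain ⟨u', rfl⟩ := hf W hW u
  exact ⟨u', (assoc _ _ _).symm⟩

namespace SES

variable {A B X : C} {f : A ⟶ B} {g : B ⟶ X}

lemma w (h : SES f g) : f ≫ g = 0 := h.choose

lemma shortExact (h : SES f g) : (ShortComplex.mk f g h.w).ShortExact := h.choose_spec

lemma mono (h : SES f g) : Mono f := h.shortExact.mono_f

lemma epi (h : SES f g) : Epi g := h.shortExact.epi_g

noncomputable def lift (h : SES f g) {T : C} (v : T ⟶ B) (hv : v ≫ g = 0) : T ⟶ A :=
  have := h.mono
  h.shortExact.exact.lift v hv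

@[simp]
lemma lift_comp (h : SES f g) {T : C} (v : T ⟶ B) (hv : v ≫ g = 0) : h.lift v hv ≫ f = v :=
  have := h.mono
  h.shortExact.exact.lift_f v hv

lemma exists_desc (h : SES f g) {T : C} (v : B ⟶ T) (hv : f ≫ v = 0) :
    ∃ u : X ⟶ T, g ≫ u = v :=
  have := h.epi
  ⟨h.shortExact.exact.desc v hv, h.shortExact.exact.g_desc v hv⟩

lemma of_lift (w : f ≫ g = 0) [Mono f] [Epi g]
    (hlift : ∀ {T : C} (v : T ⟶ B), v ≫ g = 0 → ∃ u : T ⟶ A, u ≫ f = v) : SES f g := by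
  refine ⟨w, .mk' (ShortComplex.exact_iff_exact_up_to_refinements _ |>.2 fun _ v hv => ?_) ‹_› ‹_›⟩
  obtain ⟨u, hu⟩ := hlift v hv
  exact ⟨_, 𝟙 _, inferInstance, u, by simpa using hu.symm⟩

lemma kernel_ι (e : B ⟶ X) [Epi e] : SES (kernel.ι e) e :=
  ⟨kernel.condition e,
    .mk' (ShortComplex.exact_of_f_is_kernel _ (kernelIsKernel e)) inferInstance ‹_›⟩

lemma covExact_iff (h : SES f g) : CovExact 𝒲 f g ↔ CovSurjective 𝒲 g := by
  have := h.mono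
  exact ⟨fun hc W hW => (hc W hW).2.2, fun hs W hW =>
    ⟨fun _ _ h12 => (cancel_mono f).1 h12, fun v hv => ⟨h.lift v hv, h.lift_comp v hv⟩,
      hs W hW⟩⟩

lemma contraExact_iff (h : SES f g) : ContraExact 𝒲 f g ↔ ContraSurjective 𝒲 f := by
  have := h.epi
  exact ⟨fun hc W hW => (hc W hW).2.2, fun hs W hW =>
    ⟨fun _ _ h12 => (cancel_epi g).1 h12, fun v hv => h.exists_desc v hv, hs W hW⟩⟩

end SES

section KernelComp

variable {K W Y X₁ X : C} {i : K ⟶ W} {f : W ⟶ Y} {x : X₁ ⟶ Y} {y : Y ⟶ X}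

noncomputable def SES.toKernelComp (hif : SES i f) (y : Y ⟶ X) : K ⟶ kernel (f ≫ y) :=
  kernel.lift _ i (by rw [← assoc, hif.w, zero_comp])

@[simp]
lemma SES.toKernelComp_ι (hif : SES i f) (y : Y ⟶ X) :
    hif.toKernelComp y ≫ kernel.ι (f ≫ y) = i :=
  kernel.lift_ι _ _ _

noncomputable def SES.fromKernelComp (hxy : SES x y) (f : W ⟶ Y) : kernel (f ≫ y) ⟶ X₁ :=
  hxy.lift (kernel.ι _ ≫ f) (by rw [assoc, kernel.condition])

@[simp]
lemma SES.fromKernelComp_comp (hxy : SES x y) (f : W ⟶ Y) :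
    hxy.fromKernelComp f ≫ x = kernel.ι (f ≫ y) ≫ f :=
  hxy.lift_comp _ _

lemma SES.kernelComp (hif : SES i f) (hxy : SES x y) :
    SES (hif.toKernelComp y) (hxy.fromKernelComp f) := by
  have := hif.mono
  have := hif.epi
  have := hxy.mono
  have : Mono (hif.toKernelComp y) := mono_of_mono_fac (hif.toKernelComp_ι y)
  have : Epi (hxy.fromKernelComp f) := by
    rw [epi_iff_surjective_up_to_refinements]
    intro T z
    obtain ⟨T', π, hπ, p, hp⟩ := surjective_up_to_refinements_of_epi f (z ≫ x)
    have hp0 : p ≫ f ≫ y = 0 := by rw [← assoc, ← hp]; simp [hxy.w]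
    refine ⟨T', π, hπ, kernel.lift _ p hp0, ?_⟩
    rw [← cancel_mono x]
    simp [hp]
  refine .of_lift ?_ fun v hv => ?_
  · rw [← cancel_mono x, assoc, SES.fromKernelComp_comp, ← assoc, SES.toKernelComp_ι, hif.w,
      zero_comp]
  · have hv' : (v ≫ kernel.ι (f ≫ y)) ≫ f = 0 := by
      rw [assoc, ← hxy.fromKernelComp_comp, ← assoc, hv, zero_comp]
    exact ⟨hif.lift _ hv', by rw [← cancel_mono (kernel.ι _)]; simp⟩

lemma SES.kernel_ι_comp (hif : SES i f) (hxy : SES x y) : SES (kernel.ι (f ≫ y)) (f ≫ y) :=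
  have := hif.epi
  have := hxy.epi
  .kernel_ι _

lemma SES.covSurjective_fromKernelComp (hxy : SES x y) (hf : CovSurjective 𝒲 f) :
    CovSurjective 𝒲 (hxy.fromKernelComp f) := by
  have := hxy.mono
  intro V hV v
  obtain ⟨p, hp⟩ := hf V hV (v ≫ x)
  have hp0 : p ≫ f ≫ y = 0 := by rw [← assoc, hp, assoc, hxy.w, comp_zero]
  exact ⟨kernel.lift _ p hp0, by rw [← cancel_mono x]; simp [hp]⟩

/-- Extend `φ` along `i` to `ψ`; the error `φ - kernel.ι _ ≫ ψ` then factors through `X₁`, where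
it extends along `x`. -/
lemma SES.contraSurjective_kernel_ι_comp (hif : SES i f) (hxy : SES x y)
    (hi : ContraSurjective 𝒲 i) (hx : ContraSurjective 𝒲 x) :
    ContraSurjective 𝒲 (kernel.ι (f ≫ y)) := by
  intro V hV φ
  obtain ⟨ψ, hψ⟩ := hi V hV (hif.toKernelComp y ≫ φ)
  have hχ0 : hif.toKernelComp y ≫ (φ - kernel.ι (f ≫ y) ≫ ψ) = 0 := by
    rw [comp_sub, ← assoc, hif.toKernelComp_ι, hψ, sub_self]
  obtain ⟨χ, hχ⟩ := (hif.kernelComp hxy).exists_desc _ hχ0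
  obtain ⟨ω, hω⟩ := hx V hV χ
  refine ⟨ψ + f ≫ ω, ?_⟩
  rw [comp_add, ← assoc, ← hxy.fromKernelComp_comp, assoc, hω, hχ, add_sub_cancel]

end KernelComp

section Biprod

variable {K W Y A : C} {i : K ⟶ W} {f : W ⟶ Y}

lemma SES.comp_inl_map_id (h : SES i f) (Z : C) :
    SES (i ≫ biprod.inl) (biprod.map f (𝟙 Z)) := by
  have := h.mono
  have := h.epi
  refine .of_lift (by rw [assoc, biprod.inl_map, ← assoc, h.w, zero_comp]) fun v hv => ?_
  have hv₁ : (v ≫ biprod.fst) ≫ f = 0 := by simpa using congrArg (· ≫ biprod.fst) hv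
  have hv₂ : v ≫ biprod.snd = 0 := by simpa using congrArg (· ≫ biprod.snd) hv
  exact ⟨h.lift _ hv₁, by ext <;> simp [hv₂]⟩

lemma CovSurjective.biprod_map_id (hf : CovSurjective 𝒲 f) (Z : C) :
    CovSurjective 𝒲 (biprod.map f (𝟙 Z)) := by
  intro V hV v
  obtain ⟨p, hp⟩ := hf V hV (v ≫ biprod.fst)
  exact ⟨biprod.lift p (v ≫ biprod.snd), by ext <;> simp [hp]⟩

lemma ContraSurjective.comp_inl (hi : ContraSurjective 𝒲 i) (Z : C) :
    ContraSurjective 𝒲 (i ≫ biprod.inl : K ⟶ W ⊞ Z) := by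
  intro V hV φ
  obtain ⟨ψ, hψ⟩ := hi V hV φ
  exact ⟨biprod.fst ≫ ψ, by simp [hψ]⟩

lemma ContraSurjective.biprod_lift (hi : ContraSurjective 𝒲 i) (u : K ⟶ A) :
    ContraSurjective 𝒲 (biprod.lift u i) := by
  intro V hV φ
  obtain ⟨ψ, hψ⟩ := hi V hV φ
  exact ⟨biprod.snd ≫ ψ, by simp [hψ]⟩

end Biprod

section BiprodDesc

variable {A B X C' Q : C} {a : A ⟶ B} {b : B ⟶ X} {g : C' ⟶ Q} {f : Q ⟶ X} {t : Q ⟶ B}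

lemma SES.exists_biprod_lift_desc (hab : SES a b) (hgf : SES g f) (ht : t ≫ b = f) :
    ∃ u : C' ⟶ A, SES (biprod.lift u g) (biprod.desc a t) := by
  have := hab.mono
  have := hgf.mono
  have := hgf.epi
  have hgt : (g ≫ t) ≫ b = 0 := by rw [assoc, ht, hgf.w]
  set u := hab.lift _ hgt
  have hu : u ≫ a = g ≫ t := hab.lift_comp _ hgt
  have : Epi (biprod.desc a t) := by
    rw [epi_iff_cancel_zero]
    intro T z hz
    have haz : a ≫ z = 0 := by simpa using congrArg (biprod.inl ≫ ·) hz
    have htz : t ≫ z = 0 := by simpa using congrArg (biprod.inr ≫ ·) hz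
    obtain ⟨z', rfl⟩ := hab.exists_desc z haz
    rw [← assoc, ht] at htz
    rw [(cancel_epi f).1 (htz.trans (comp_zero).symm), comp_zero]
  have : Mono (biprod.lift (-u) g) := mono_of_mono_fac (biprod.lift_snd _ _)
  refine ⟨-u, .of_lift (by simp [hu]) fun v hv => ?_⟩
  have hv' : v ≫ biprod.fst ≫ a + v ≫ biprod.snd ≫ t = 0 := by simpa [biprod.desc_eq] using hv
  have hvf : (v ≫ biprod.snd) ≫ f = 0 :=
    calc (v ≫ biprod.snd) ≫ f = (v ≫ biprod.snd ≫ t) ≫ b := by rw [← ht]; simp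
      _ = (-(v ≫ biprod.fst ≫ a)) ≫ b := by rw [eq_neg_of_add_eq_zero_right hv']
      _ = 0 := by simp [hab.w]
  refine ⟨hgf.lift _ hvf, biprod.hom_ext _ _ ?_ (by simp)⟩
  rw [← cancel_mono a]
  simp only [assoc, biprod.lift_fst, neg_comp, hu, comp_neg]
  rw [← assoc, hgf.lift_comp, assoc, eq_neg_of_add_eq_zero_right hv', neg_neg]

lemma CovSurjective.biprod_desc (hab : SES a b) (ht : t ≫ b = f) (hf : CovSurjective 𝒲 f) :
    CovSurjective 𝒲 (biprod.desc a t) := by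
  intro V hV v
  obtain ⟨q, hq⟩ := hf V hV (v ≫ b)
  have hr : (v - q ≫ t) ≫ b = 0 := by rw [sub_comp, assoc, ht, hq, sub_self]
  exact ⟨biprod.lift (hab.lift _ hr) q, by simp⟩

end BiprodDesc

variable (𝒲) in
structure CovExtension (A X : C) where
  B : C
  a : A ⟶ B
  b : B ⟶ X
  ses : SES a b
  cov : CovExact 𝒲 a b

namespace CovExtension

noncomputable def ofKernelComp {K W Y X₁ X : C} {i : K ⟶ W} {f : W ⟶ Y} {x : X₁ ⟶ Y}
    {y : Y ⟶ X} (hif : SES i f) (hf : CovSurjective 𝒲 f) (hxy : SES x y) :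
    CovExtension 𝒲 K X₁ where
  B := kernel (f ≫ y)
  a := hif.toKernelComp y
  b := hxy.fromKernelComp f
  ses := hif.kernelComp hxy
  cov := (hif.kernelComp hxy).covExact_iff.2 (hxy.covSurjective_fromKernelComp hf)

variable {A X Q : C} (E : CovExtension 𝒲 A X)

noncomputable def liftOfMem (hQ : Q ∈ 𝒲) (f : Q ⟶ X) : Q ⟶ E.B :=
  (E.ses.covExact_iff.1 E.cov Q hQ f).choose

@[simp]
lemma liftOfMem_b (hQ : Q ∈ 𝒲) (f : Q ⟶ X) : E.liftOfMem hQ f ≫ E.b = f :=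
  (E.ses.covExact_iff.1 E.cov Q hQ f).choose_spec

noncomputable def horseshoeMap {P : C} (p : P ⟶ A) (hQ : Q ∈ 𝒲) (q : Q ⟶ X) : P ⊞ Q ⟶ E.B :=
  biprod.map p (𝟙 Q) ≫ biprod.desc E.a (E.liftOfMem hQ q)

variable {A' P X' : C} {gA : A' ⟶ P} {fA : P ⟶ A} {gX : X' ⟶ Q} {fX : Q ⟶ X}

lemma exists_ses_biprod_desc (hX : SES gX fX) (hQ : Q ∈ 𝒲) :
    ∃ u : X' ⟶ A, SES (biprod.lift u gX) (biprod.desc E.a (E.liftOfMem hQ fX)) :=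
  E.ses.exists_biprod_lift_desc hX (E.liftOfMem_b hQ fX)

noncomputable def next (hA : SES gA fA) (hfA : CovSurjective 𝒲 fA) (hX : SES gX fX)
    (hQ : Q ∈ 𝒲) : CovExtension 𝒲 A' X' :=
  ofKernelComp (hA.comp_inl_map_id Q) (hfA.biprod_map_id Q)
    (E.exists_ses_biprod_desc hX hQ).choose_spec

lemma ses_horseshoeMap (hA : SES gA fA) (hX : SES gX fX) (hQ : Q ∈ 𝒲) :
    SES (kernel.ι (E.horseshoeMap fA hQ fX)) (E.horseshoeMap fA hQ fX) :=
  have := (hA.comp_inl_map_id Q).epi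
  have := (E.exists_ses_biprod_desc hX hQ).choose_spec.epi
  have : Epi (E.horseshoeMap fA hQ fX) := epi_comp _ _
  .kernel_ι _

lemma covSurjective_horseshoeMap (hfA : CovSurjective 𝒲 fA) (hQ : Q ∈ 𝒲)
    (hfX : CovSurjective 𝒲 fX) : CovSurjective 𝒲 (E.horseshoeMap fA hQ fX) :=
  (hfA.biprod_map_id Q).comp (.biprod_desc E.ses (E.liftOfMem_b hQ fX) hfX)

lemma contraSurjective_kernel_ι_horseshoeMap (hA : SES gA fA) (hX : SES gX fX) (hQ : Q ∈ 𝒲)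
    (hgA : ContraSurjective 𝒲 gA) (hgX : ContraSurjective 𝒲 gX) :
    ContraSurjective 𝒲 (kernel.ι (E.horseshoeMap fA hQ fX)) :=
  (hA.comp_inl_map_id Q).contraSurjective_kernel_ι_comp
    (E.exists_ses_biprod_desc hX hQ).choose_spec (hgA.comp_inl Q) (hgX.biprod_lift _)

end CovExtension

namespace ProperResolution

variable {X₀ X₁ X : C} {W₀ W₁ : ℕ → C}

lemma covSurjective_f {A : C} {W : ℕ → C} (R : ProperResolution 𝒲 A W) (i : ℕ) :
    CovSurjective 𝒲 (R.f i) :=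
  (R.ses i).covExact_iff.1 (R.proper i)

lemma IsContraExact.contraSurjective_g {A : C} {W : ℕ → C} {R : ProperResolution 𝒲 A W}
    (h : R.IsContraExact) (i : ℕ) : ContraSurjective 𝒲 (R.g i) :=
  (R.ses i).contraExact_iff.1 (h i)

noncomputable def horseshoeTerms (W₀ W₁ : ℕ → C) (n : ℕ) : C :=
  Nat.casesOn n (W₀ 0) fun n => W₀ (n + 1) ⊞ W₁ n

variable (R₀ : ProperResolution 𝒲 X₀ W₀) (R₁ : ProperResolution 𝒲 X₁ W₁)
  {x : R₁.K 0 ⟶ R₀.K 0} {y : R₀.K 0 ⟶ X} (hxy : SES x y)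

noncomputable def horseshoeExtension (n : ℕ) : CovExtension 𝒲 (R₀.K (n + 1)) (R₁.K n) :=
  Nat.rec (.ofKernelComp (R₀.ses 0) (R₀.covSurjective_f 0) hxy)
    (fun n E => E.next (R₀.ses (n + 1)) (R₀.covSurjective_f (n + 1)) (R₁.ses n) (R₁.mem n)) n

variable (hsum : ∀ {U V : C}, U ∈ 𝒲 → V ∈ 𝒲 → (U ⊞ V) ∈ 𝒲) (hcov : CovExact 𝒲 x y)

noncomputable def horseshoe : ProperResolution 𝒲 X (horseshoeTerms W₀ W₁) :=
  let E := R₀.horseshoeExtension R₁ hxy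
  { K n := Nat.casesOn n X fun n => (E n).B
    hK := rfl
    g n := Nat.casesOn n (kernel.ι (R₀.f 0 ≫ y))
      fun n => kernel.ι ((E n).horseshoeMap (R₀.f (n + 1)) (R₁.mem n) (R₁.f n))
    f n := Nat.casesOn n (R₀.f 0 ≫ y)
      fun n => (E n).horseshoeMap (R₀.f (n + 1)) (R₁.mem n) (R₁.f n)
    mem n := Nat.casesOn n (R₀.mem 0) fun n => hsum (R₀.mem (n + 1)) (R₁.mem n)
    ses n := Nat.casesOn n ((R₀.ses 0).kernel_ι_comp hxy)
      fun n => (E n).ses_horseshoeMap (R₀.ses (n + 1)) (R₁.ses n) (R₁.mem n)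
    proper n := Nat.casesOn n
      (((R₀.ses 0).kernel_ι_comp hxy).covExact_iff.2
        ((R₀.covSurjective_f 0).comp (hxy.covExact_iff.1 hcov)))
      fun n => ((E n).ses_horseshoeMap (R₀.ses (n + 1)) (R₁.ses n) (R₁.mem n)).covExact_iff.2
        ((E n).covSurjective_horseshoeMap (R₀.covSurjective_f (n + 1)) (R₁.mem n)
          (R₁.covSurjective_f n)) }

lemma horseshoe_isContraExact (h₀ : R₀.IsContraExact) (h₁ : R₁.IsContraExact)
    (hxy' : ContraExact 𝒲 x y) : (R₀.horseshoe R₁ hxy hsum hcov).IsContraExact := by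
  intro n
  cases n with
  | zero =>
    exact ((R₀.ses 0).kernel_ι_comp hxy).contraExact_iff.2
      ((R₀.ses 0).contraSurjective_kernel_ι_comp hxy (h₀.contraSurjective_g 0)
        (hxy.contraExact_iff.1 hxy'))
  | succ n =>
    let E := R₀.horseshoeExtension R₁ hxy n
    exact (E.ses_horseshoeMap (R₀.ses (n + 1)) (R₁.ses n) (R₁.mem n)).contraExact_iff.2
      (E.contraSurjective_kernel_ι_horseshoeMap (R₀.ses (n + 1)) (R₁.ses n) (R₁.mem n)
        (h₀.contraSurjective_g (n + 1)) (h₁.contraSurjective_g n))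

end ProperResolution

theorem stmt_10 (𝒲 : Set C)
    (hsum : ∀ {U V : C}, U ∈ 𝒲 → V ∈ 𝒲 → (U ⊞ V) ∈ 𝒲)
    {X1 X0 X : C} (x : X1 ⟶ X0) (y : X0 ⟶ X)
    (hses : SES x y) (hcov : CovExact 𝒲 x y)
    (W0 W1 : ℕ → C)
    (R0 : ProperResolution 𝒲 X0 W0) (R1 : ProperResolution 𝒲 X1 W1) :
    -- (1) a proper 𝒲-resolution of X with 0-th term W₀⁰ and i-th term W₀ⁱ ⊕ W₁^{i-1} (i ≥ 1)
    Nonempty (ProperResolution 𝒲 X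
      (fun i => match i with | 0 => W0 0 | n + 1 => W0 (n + 1) ⊞ W1 n)) ∧
    -- (2) if everything in sight is Hom(-,𝒲)-exact, it can be chosen Hom(-,𝒲)-exact as well
    (R0.IsContraExact → R1.IsContraExact → ContraExact 𝒲 x y →
      ∃ R : ProperResolution 𝒲 X
          (fun i => match i with | 0 => W0 0 | n + 1 => W0 (n + 1) ⊞ W1 n),
        R.IsContraExact) := by
  obtain ⟨K0, rfl, g0, f0, mem0, ses0, proper0⟩ := R0
  obtain ⟨K1, rfl, g1, f1, mem1, ses1, proper1⟩ := R1
  let R0 : ProperResolution 𝒲 (K0 0) W0 := ⟨K0, rfl, g0, f0, mem0, ses0, proper0⟩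
  let R1 : ProperResolution 𝒲 (K1 0) W1 := ⟨K1, rfl, g1, f1, mem1, ses1, proper1⟩
  have hterms : ProperResolution.horseshoeTerms W0 W1 =
      fun i => match i with | 0 => W0 0 | n + 1 => W0 (n + 1) ⊞ W1 n := by
    funext i; cases i <;> rfl
  rw [← hterms]
  exact ⟨⟨R0.horseshoe R1 hses hsum hcov⟩,
    fun h0 h1 hxy => ⟨_, R0.horseshoe_isContraExact R1 hses hsum hcov h0 h1 hxy⟩⟩
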